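/- Let A and B be disjoint graphs, a a vertex of A of degree 3 with neighbors a₁,a₂,a₃, b a vertex of B of degree 3 with neighbors b₁,b₂,b₃, and G = AaσbB. Let P be a Λ-factor of G and let P' be the set of paths of P that contain at least one of the edges a₁b₁, a₂b₂, a₃b₃. If v(A) ≡ 1 (mod 3), then exactly one of the following holds: (a2.1) P' is empty; (a2.2) P' consists of exactly two paths, one having exactly one vertex in A − a and two adjacent vertices in B − b, and the other having two adjacent vertices in A − a and exactly one vertex in B − b; (a2.3) P' consists of exactly three paths and either every path of P' has exactly one vertex in A − a and two adjacent vertices in B − b, or every path of P' has two adjacent vertices in A − a and exactly one vertex in B − b. -/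
import Mathlib


open SimpleGraph

/-- `p` encodes a 3-vertex path (a `Λ`) in `G`: three distinct vertices, the first
adjacent to the second and the second adjacent to the third. -/
def IsPathL {V : Type*} (G : SimpleGraph V) (p : V × V × V) : Prop :=
  p.1 ≠ p.2.1 ∧ p.2.1 ≠ p.2.2 ∧ p.1 ≠ p.2.2 ∧ G.Adj p.1 p.2.1 ∧ G.Adj p.2.1 p.2.2

/-- The vertex set of an encoded 3-vertex path. -/
def pVerts {V : Type*} (p : V × V × V) : Set V := {p.1, p.2.1, p.2.2}

/-- The edge set of an encoded 3-vertex path. -/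
def pEdges {V : Type*} (p : V × V × V) : Set (Sym2 V) := {s(p.1, p.2.1), s(p.2.1, p.2.2)}

/-- A `Λ`-packing of `G`: a collection of pairwise vertex-disjoint 3-vertex paths of `G`. -/
def IsPacking {V : Type*} (G : SimpleGraph V) (P : Finset (V × V × V)) : Prop :=
  (∀ p ∈ P, IsPathL G p) ∧
  ∀ p ∈ P, ∀ q ∈ P, p ≠ q → Disjoint (pVerts p) (pVerts q)

/-- A `Λ`-factor of the induced subgraph of `G` on the vertex set `S`:
a `Λ`-packing whose paths lie in `S` and together cover all of `S`. -/
def IsFactorOn {V : Type*} (G : SimpleGraph V) (S : Set V) (P : Finset (V × V × V)) : Prop :=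
  IsPacking G P ∧ (∀ p ∈ P, pVerts p ⊆ S) ∧ ∀ v ∈ S, ∃ p ∈ P, v ∈ pVerts p

/-- A `Λ`-factor of `G`. -/
def IsFactor {V : Type*} (G : SimpleGraph V) (P : Finset (V × V × V)) : Prop :=
  IsFactorOn G Set.univ P

/-- The packing `P` contains the edge `e`. -/
def PContains {V : Type*} (P : Finset (V × V × V)) (e : Sym2 V) : Prop :=
  ∃ p ∈ P, e ∈ pEdges p

/-- `λ(G)`: the maximum number of pairwise disjoint 3-vertex paths in `G`. -/
noncomputable def lambdaNum {V : Type*} (G : SimpleGraph V) [Fintype V] : ℕ :=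
  sSup {n | ∃ P : Finset (V × V × V), IsPacking G P ∧ P.card = n}

/-- Every vertex of `G` has degree exactly 3. -/
def IsCubic {V : Type*} (G : SimpleGraph V) : Prop :=
  ∀ v, (G.neighborSet v).ncard = 3

/-- `G` is `k`-connected: more than `k` vertices, and deleting any set of fewer than
`k` vertices leaves a connected graph. -/
def KConnected {V : Type*} (k : ℕ) (G : SimpleGraph V) [Fintype V] : Prop :=
  k < Fintype.card V ∧ ∀ S : Set V, S.ncard < k → (G.induce Sᶜ).Connected

/-- The graph `AaσbB`: delete vertices `a` from `A` and `b` from `B`, then join the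
neighbors `a₁,a₂,a₃` of `a` to the neighbors `b₁,b₂,b₃` of `b` by the matching
`a₁b₁, a₂b₂, a₃b₃`. -/
def glueV {VA VB : Type*} (A : SimpleGraph VA) (B : SimpleGraph VB) (a : VA) (b : VB)
    (a1 a2 a3 : VA) (b1 b2 b3 : VB) :
    SimpleGraph ({x : VA // x ≠ a} ⊕ {y : VB // y ≠ b}) :=
  SimpleGraph.fromRel fun u v =>
    match u, v with
    | Sum.inl x, Sum.inl y => A.Adj x.1 y.1
    | Sum.inl x, Sum.inr y =>
        (x.1 = a1 ∧ y.1 = b1) ∨ (x.1 = a2 ∧ y.1 = b2) ∨ (x.1 = a3 ∧ y.1 = b3)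
    | Sum.inr x, Sum.inr y => B.Adj x.1 y.1
    | Sum.inr _, Sum.inl _ => False

/-- The path `p` of `AaσbB` has two adjacent vertices in `A − a` and one vertex
in `B − b`. -/
def TwoAOneB {VA VB : Type*} (A : SimpleGraph VA) (a : VA) (b : VB)
    (p : ({x : VA // x ≠ a} ⊕ {y : VB // y ≠ b}) × ({x : VA // x ≠ a} ⊕ {y : VB // y ≠ b})
      × ({x : VA // x ≠ a} ⊕ {y : VB // y ≠ b})) : Prop :=
  ∃ (x y : {x : VA // x ≠ a}) (z : {y : VB // y ≠ b}),
    pVerts p = {Sum.inl x, Sum.inl y, Sum.inr z} ∧ A.Adj x.1 y.1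

/-- The path `p` of `AaσbB` has exactly one vertex in `A − a` and two adjacent vertices
in `B − b`. -/
def OneATwoB {VA VB : Type*} (B : SimpleGraph VB) (a : VA) (b : VB)
    (p : ({x : VA // x ≠ a} ⊕ {y : VB // y ≠ b}) × ({x : VA // x ≠ a} ⊕ {y : VB // y ≠ b})
      × ({x : VA // x ≠ a} ⊕ {y : VB // y ≠ b})) : Prop :=
  ∃ (x : {x : VA // x ≠ a}) (y z : {y : VB // y ≠ b}),
    pVerts p = {Sum.inl x, Sum.inr y, Sum.inr z} ∧ B.Adj y.1 z.1

section AuxGlue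

variable {VA VB : Type*} (A : SimpleGraph VA) (B : SimpleGraph VB) (a : VA) (b : VB)
    (a1 a2 a3 : VA) (b1 b2 b3 : VB)

lemma glue_ll {x y : {x : VA // x ≠ a}} :
    (glueV A B a b a1 a2 a3 b1 b2 b3).Adj (Sum.inl x) (Sum.inl y) ↔ A.Adj x.1 y.1 := by
  simp only [glueV, fromRel_adj]
  constructor
  · rintro ⟨-, h | h⟩
    · exact h
    · exact h.symm
  · intro h
    exact ⟨fun e => h.ne (congrArg Subtype.val (Sum.inl_injective e)), Or.inl h⟩

lemma glue_rr {x y : {y : VB // y ≠ b}} :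
    (glueV A B a b a1 a2 a3 b1 b2 b3).Adj (Sum.inr x) (Sum.inr y) ↔ B.Adj x.1 y.1 := by
  simp only [glueV, fromRel_adj]
  constructor
  · rintro ⟨-, h | h⟩
    · exact h
    · exact h.symm
  · intro h
    exact ⟨fun e => h.ne (congrArg Subtype.val (Sum.inr_injective e)), Or.inl h⟩

lemma glue_lr {x : {x : VA // x ≠ a}} {y : {y : VB // y ≠ b}} :
    (glueV A B a b a1 a2 a3 b1 b2 b3).Adj (Sum.inl x) (Sum.inr y) ↔
    ((x.1 = a1 ∧ y.1 = b1) ∨ (x.1 = a2 ∧ y.1 = b2) ∨ (x.1 = a3 ∧ y.1 = b3)) := by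
  simp only [glueV, fromRel_adj]
  constructor
  · rintro ⟨-, h | h⟩
    · exact h
    · exact h.elim
  · intro h
    exact ⟨by simp, Or.inl h⟩

end AuxGlue

section AuxCnt

variable {S T : Type*} [DecidableEq S] [DecidableEq T]

/-- number of left-side vertices of an encoded path -/
def Acnt (p : (S ⊕ T) × (S ⊕ T) × (S ⊕ T)) : ℕ :=
  (({p.1, p.2.1, p.2.2} : Finset (S ⊕ T)).filter (fun v => v.isLeft = true)).card

lemma Acnt_lrr (x : S) (y z : T) : Acnt (Sum.inl x, Sum.inr y, Sum.inr z) = 1 := by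
  simp [Acnt, Finset.filter_insert, Finset.filter_singleton]

lemma Acnt_rrl (x y : T) (z : S) : Acnt (Sum.inr x, Sum.inr y, Sum.inl z) = 1 := by
  simp [Acnt, Finset.filter_insert, Finset.filter_singleton]

lemma Acnt_rll (x : T) (y z : S) (h : y ≠ z) : Acnt (Sum.inr x, Sum.inl y, Sum.inl z) = 2 := by
  simp only [Acnt, Finset.filter_insert, Finset.filter_singleton]
  simp [h]

lemma Acnt_llr (y z : S) (x : T) (h : y ≠ z) : Acnt (Sum.inl y, Sum.inl z, Sum.inr x) = 2 := by
  simp only [Acnt, Finset.filter_insert, Finset.filter_singleton]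
  simp [h]

lemma Acnt_lll (x y z : S) (hxy : x ≠ y) (hxz : x ≠ z) (hyz : y ≠ z) :
    Acnt ((Sum.inl x : S ⊕ T), Sum.inl y, Sum.inl z) = 3 := by
  simp only [Acnt]
  rw [Finset.filter_true_of_mem (by
    intro v hv
    simp only [Finset.mem_insert, Finset.mem_singleton] at hv
    rcases hv with h | h | h <;> subst h <;> rfl)]
  rw [Finset.card_insert_of_notMem (by simp [hxy, hxz]),
    Finset.card_insert_of_notMem (by simp [hyz]), Finset.card_singleton]

lemma Acnt_rrr (x y z : T) : Acnt ((Sum.inr x : S ⊕ T), Sum.inr y, Sum.inr z) = 0 := by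
  simp [Acnt, Finset.filter_insert, Finset.filter_singleton]

variable [Fintype S] [Fintype T]

lemma sum_Acnt (G : SimpleGraph (S ⊕ T)) (P : Finset ((S ⊕ T) × (S ⊕ T) × (S ⊕ T)))
    (hP : IsFactor G P) : ∑ p ∈ P, Acnt p = Fintype.card S := by
  classical
  obtain ⟨⟨hpath, hdisj⟩, -, hcov⟩ := hP
  have key : (Finset.univ.filter (fun v : S ⊕ T => v.isLeft = true)) =
      P.biUnion (fun p => ({p.1, p.2.1, p.2.2} : Finset (S ⊕ T)).filter
        (fun v => v.isLeft = true)) := by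
    ext v
    simp only [Finset.mem_filter, Finset.mem_univ, true_and, Finset.mem_biUnion,
      Finset.mem_insert, Finset.mem_singleton]
    constructor
    · intro hv
      obtain ⟨p, hp, hvp⟩ := hcov v (Set.mem_univ v)
      refine ⟨p, hp, ?_, hv⟩
      simpa [pVerts] using hvp
    · rintro ⟨p, -, -, hv⟩
      exact hv
  have hdisj' : ∀ p ∈ P, ∀ q ∈ P, p ≠ q →
      Disjoint (({p.1, p.2.1, p.2.2} : Finset (S ⊕ T)).filter (fun v => v.isLeft = true))
        (({q.1, q.2.1, q.2.2} : Finset (S ⊕ T)).filter (fun v => v.isLeft = true)) := by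
    intro p hp q hq hne
    rw [Finset.disjoint_left]
    intro v hv1 hv2
    simp only [Finset.mem_filter, Finset.mem_insert, Finset.mem_singleton] at hv1 hv2
    exact Set.disjoint_left.1 (hdisj p hp q hq hne)
      (by simpa [pVerts] using hv1.1) (by simpa [pVerts] using hv2.1)
  have h1 : (Finset.univ.filter (fun v : S ⊕ T => v.isLeft = true)).card = Fintype.card S := by
    have h2 : (Finset.univ.filter (fun v : S ⊕ T => v.isLeft = true)) =
        Finset.univ.map ⟨Sum.inl, Sum.inl_injective⟩ := by
      ext v; cases v <;> simp
    rw [h2, Finset.card_map, Finset.card_univ]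
  rw [← h1, key, Finset.card_biUnion hdisj']
  rfl

end AuxCnt

lemma card_ne_aux {VA : Type*} [Fintype VA] [DecidableEq VA] (a : VA) :
    Fintype.card {x : VA // x ≠ a} = Fintype.card VA - 1 := by
  simp [Fintype.card_subtype_compl]

lemma card_le_three_aux {V : Type*} [DecidableEq V] (P' : Finset (V × V × V)) (v1 v2 v3 : V)
    (hocc : ∀ p ∈ P',
      (p.1 = v1 ∨ p.2.1 = v1 ∨ p.2.2 = v1) ∨ (p.1 = v2 ∨ p.2.1 = v2 ∨ p.2.2 = v2) ∨
      (p.1 = v3 ∨ p.2.1 = v3 ∨ p.2.2 = v3))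
    (hdisj : ∀ p ∈ P', ∀ q ∈ P', p ≠ q → Disjoint (pVerts p) (pVerts q)) :
    P'.card ≤ 3 := by
  classical
  set f : V × V × V → V := fun p =>
    if p.1 = v1 ∨ p.2.1 = v1 ∨ p.2.2 = v1 then v1
    else if p.1 = v2 ∨ p.2.1 = v2 ∨ p.2.2 = v2 then v2 else v3 with hf
  have hFv : ∀ p ∈ P', f p = p.1 ∨ f p = p.2.1 ∨ f p = p.2.2 := by
    intro p hp
    by_cases c1 : p.1 = v1 ∨ p.2.1 = v1 ∨ p.2.2 = v1
    · rw [hf]; simp only [if_pos c1]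
      rcases c1 with h | h | h <;> simp [h]
    · by_cases c2 : p.1 = v2 ∨ p.2.1 = v2 ∨ p.2.2 = v2
      · rw [hf]; simp only [if_neg c1, if_pos c2]
        rcases c2 with h | h | h <;> simp [h]
      · rw [hf]; simp only [if_neg c1, if_neg c2]
        rcases hocc p hp with h | h | h
        · exact absurd h c1
        · exact absurd h c2
        · rcases h with h | h | h <;> simp [h]
  have hmaps : ∀ p ∈ P', f p ∈ ({v1, v2, v3} : Finset V) := by
    intro p hp
    rw [hf]
    dsimp only
    split_ifs <;> simp
  have hinj : Set.InjOn f ↑P' := by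
    intro p hp q hq hfeq
    by_contra hne
    have h1 := hFv p (Finset.mem_coe.1 hp)
    have h2 := hFv q (Finset.mem_coe.1 hq)
    have hd := hdisj p (Finset.mem_coe.1 hp) q (Finset.mem_coe.1 hq) hne
    have hp1 : f p ∈ pVerts p := by rcases h1 with h | h | h <;> simp [pVerts, h]
    have hq1 : f p ∈ pVerts q := by
      rw [hfeq]; rcases h2 with h | h | h <;> simp [pVerts, h]
    exact Set.disjoint_left.1 hd hp1 hq1
  calc P'.card ≤ ({v1, v2, v3} : Finset V).card := Finset.card_le_card_of_injOn f hmaps hinj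
  _ ≤ 3 := by
    refine le_trans (Finset.card_insert_le _ _) ?_
    exact Nat.succ_le_succ (le_trans (Finset.card_insert_le _ _) (by simp))

section AuxClassify

variable {VA VB : Type*} [DecidableEq VA] [DecidableEq VB]
    (A : SimpleGraph VA) (B : SimpleGraph VB) (a : VA) (b : VB)
    (a1 a2 a3 : VA) (b1 b2 b3 : VB)

lemma classify_one (α : {x : VA // x ≠ a}) (β : {y : VB // y ≠ b})
    (huniq : ∀ (x : {x : VA // x ≠ a}) (y : {y : VB // y ≠ b}),
      (glueV A B a b a1 a2 a3 b1 b2 b3).Adj (Sum.inl x) (Sum.inr y) → (x = α ↔ y = β))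
    (p : ({x : VA // x ≠ a} ⊕ {y : VB // y ≠ b}) × ({x : VA // x ≠ a} ⊕ {y : VB // y ≠ b})
      × ({x : VA // x ≠ a} ⊕ {y : VB // y ≠ b}))
    (hpath : IsPathL (glueV A B a b a1 a2 a3 b1 b2 b3) p)
    (he : s(Sum.inl α, Sum.inr β) ∈ pEdges p) :
    (OneATwoB B a b p ∧ Acnt p = 1) ∨ (TwoAOneB A a b p ∧ Acnt p = 2) := by
  obtain ⟨u, v, w⟩ := p
  obtain ⟨huv, hvw, huw, hA1, hA2⟩ := hpath
  simp only [pEdges, Set.mem_insert_iff, Set.mem_singleton_iff] at he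
  rcases he with he | he <;> rw [Sym2.eq_iff] at he
  · rcases he with ⟨h1, h2⟩ | ⟨h1, h2⟩
    · subst h1; subst h2
      cases w with
      | inl z =>
        exfalso
        have hz := (huniq z β hA2.symm).2 rfl
        exact huw (by rw [hz])
      | inr z =>
        left
        exact ⟨⟨α, β, z, rfl, (glue_rr A B a b a1 a2 a3 b1 b2 b3).1 hA2⟩, Acnt_lrr α β z⟩
    · subst h1; subst h2
      cases w with
      | inr z =>
        exfalso
        have hz := (huniq α z hA2).1 rfl
        exact huw (by rw [hz])
      | inl z =>
        right
        have hαz : α ≠ z := fun h => hvw (by rw [h])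
        refine ⟨⟨α, z, β, ?_, (glue_ll A B a b a1 a2 a3 b1 b2 b3).1 hA2⟩, Acnt_rll β α z hαz⟩
        ext t
        simp only [pVerts, Set.mem_insert_iff, Set.mem_singleton_iff]
        tauto
  · rcases he with ⟨h1, h2⟩ | ⟨h1, h2⟩
    · subst h1; subst h2
      cases u with
      | inr z =>
        exfalso
        have hz := (huniq α z hA1.symm).1 rfl
        exact huw.symm (by rw [hz])
      | inl z =>
        right
        have hzα : z ≠ α := fun h => huv (by rw [h])
        exact ⟨⟨z, α, β, rfl, (glue_ll A B a b a1 a2 a3 b1 b2 b3).1 hA1⟩, Acnt_llr z α β hzα⟩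
    · subst h1; subst h2
      cases u with
      | inl z =>
        exfalso
        have hz := (huniq z β hA1).2 rfl
        exact huw (by rw [hz])
      | inr z =>
        left
        refine ⟨⟨α, z, β, ?_, (glue_rr A B a b a1 a2 a3 b1 b2 b3).1 hA1⟩, Acnt_rrl z β α⟩
        ext t
        simp only [pVerts, Set.mem_insert_iff, Set.mem_singleton_iff]
        tauto

lemma noncross (ha1 : a1 ≠ a) (ha2 : a2 ≠ a) (ha3 : a3 ≠ a)
    (hb1 : b1 ≠ b) (hb2 : b2 ≠ b) (hb3 : b3 ≠ b)
    (p : ({x : VA // x ≠ a} ⊕ {y : VB // y ≠ b}) × ({x : VA // x ≠ a} ⊕ {y : VB // y ≠ b})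
      × ({x : VA // x ≠ a} ⊕ {y : VB // y ≠ b}))
    (hpath : IsPathL (glueV A B a b a1 a2 a3 b1 b2 b3) p)
    (hnc : ¬ ∃ e ∈ pEdges p,
      e = s(Sum.inl ⟨a1, ha1⟩, Sum.inr ⟨b1, hb1⟩) ∨
      e = s(Sum.inl ⟨a2, ha2⟩, Sum.inr ⟨b2, hb2⟩) ∨
      e = s(Sum.inl ⟨a3, ha3⟩, Sum.inr ⟨b3, hb3⟩)) :
    Acnt p = 0 ∨ Acnt p = 3 := by
  have hcr : ∀ (x : {x : VA // x ≠ a}) (y : {y : VB // y ≠ b}),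
      (glueV A B a b a1 a2 a3 b1 b2 b3).Adj (Sum.inl x) (Sum.inr y) →
      (s(Sum.inl x, Sum.inr y) = s(Sum.inl ⟨a1, ha1⟩, (Sum.inr ⟨b1, hb1⟩ :
          {x : VA // x ≠ a} ⊕ {y : VB // y ≠ b})) ∨
       s(Sum.inl x, Sum.inr y) = s(Sum.inl ⟨a2, ha2⟩, Sum.inr ⟨b2, hb2⟩) ∨
       s(Sum.inl x, Sum.inr y) = s(Sum.inl ⟨a3, ha3⟩, Sum.inr ⟨b3, hb3⟩)) := by
    intro x y h
    rcases (glue_lr A B a b a1 a2 a3 b1 b2 b3).1 h with ⟨hx, hy⟩ | ⟨hx, hy⟩ | ⟨hx, hy⟩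
    · left; rw [show x = ⟨a1, ha1⟩ from Subtype.ext hx, show y = ⟨b1, hb1⟩ from Subtype.ext hy]
    · right; left
      rw [show x = ⟨a2, ha2⟩ from Subtype.ext hx, show y = ⟨b2, hb2⟩ from Subtype.ext hy]
    · right; right
      rw [show x = ⟨a3, ha3⟩ from Subtype.ext hx, show y = ⟨b3, hb3⟩ from Subtype.ext hy]
  obtain ⟨u, v, w⟩ := p
  obtain ⟨huv, hvw, huw, hA1, hA2⟩ := hpath
  cases u with
  | inl u' =>
    cases v with
    | inl v' =>
      cases w with
      | inl w' =>
        right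
        exact Acnt_lll u' v' w' (fun h => huv (by rw [h])) (fun h => huw (by rw [h]))
          (fun h => hvw (by rw [h]))
      | inr w' => exact absurd ⟨_, Or.inr rfl, hcr v' w' hA2⟩ hnc
    | inr v' => exact absurd ⟨_, Or.inl rfl, hcr u' v' hA1⟩ hnc
  | inr u' =>
    cases v with
    | inl v' =>
      exact absurd ⟨s(Sum.inl v', Sum.inr u'), Or.inl (Sym2.eq_swap), hcr v' u' hA1.symm⟩ hnc
    | inr v' =>
      cases w with
      | inl w' =>
        exact absurd ⟨s(Sum.inl w', Sum.inr v'), Or.inr (Sym2.eq_swap), hcr w' v' hA2.symm⟩ hnc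
      | inr w' =>
        left
        exact Acnt_rrr u' v' w'

end AuxClassify

/-- Case analysis (a2) for a `Λ`-factor `P` of `G = AaσbB` when `v(A) ≡ 1 (mod 3)`:
with `P'` the set of paths of `P` meeting the three cross edges, exactly one of
(a2.1), (a2.2), (a2.3) holds. -/
theorem stmt9 {VA VB : Type*} [Fintype VA] [Fintype VB] [DecidableEq VA] [DecidableEq VB]
    (A : SimpleGraph VA) (B : SimpleGraph VB) (a : VA) (b : VB)
    (a1 a2 a3 : VA) (b1 b2 b3 : VB)
    (hNa : A.neighborSet a = {a1, a2, a3})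
    (ha12 : a1 ≠ a2) (ha13 : a1 ≠ a3) (ha23 : a2 ≠ a3)
    (hNb : B.neighborSet b = {b1, b2, b3})
    (hb12 : b1 ≠ b2) (hb13 : b1 ≠ b3) (hb23 : b2 ≠ b3)
    (ha1 : a1 ≠ a) (ha2 : a2 ≠ a) (ha3 : a3 ≠ a)
    (hb1 : b1 ≠ b) (hb2 : b2 ≠ b) (hb3 : b3 ≠ b)
    (hmod : Fintype.card VA % 3 = 1)
    (P P' : Finset (({x : VA // x ≠ a} ⊕ {y : VB // y ≠ b})
      × ({x : VA // x ≠ a} ⊕ {y : VB // y ≠ b}) × ({x : VA // x ≠ a} ⊕ {y : VB // y ≠ b})))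
    (hP : IsFactor (glueV A B a b a1 a2 a3 b1 b2 b3) P)
    (hP' : ∀ p, p ∈ P' ↔ p ∈ P ∧ ∃ e ∈ pEdges p,
      e = s(Sum.inl ⟨a1, ha1⟩, Sum.inr ⟨b1, hb1⟩) ∨
      e = s(Sum.inl ⟨a2, ha2⟩, Sum.inr ⟨b2, hb2⟩) ∨
      e = s(Sum.inl ⟨a3, ha3⟩, Sum.inr ⟨b3, hb3⟩)) :
    ((P' = ∅) ∨
     (∃ p ∈ P', ∃ q ∈ P', p ≠ q ∧ P' = {p, q} ∧
        OneATwoB B a b p ∧ TwoAOneB A a b q) ∨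
     (P'.card = 3 ∧ ((∀ p ∈ P', OneATwoB B a b p) ∨ (∀ p ∈ P', TwoAOneB A a b p)))) ∧
    ¬((P' = ∅) ∧
      (∃ p ∈ P', ∃ q ∈ P', p ≠ q ∧ P' = {p, q} ∧
        OneATwoB B a b p ∧ TwoAOneB A a b q)) ∧
    ¬((P' = ∅) ∧
      (P'.card = 3 ∧ ((∀ p ∈ P', OneATwoB B a b p) ∨ (∀ p ∈ P', TwoAOneB A a b p)))) ∧
    ¬((∃ p ∈ P', ∃ q ∈ P', p ≠ q ∧ P' = {p, q} ∧
        OneATwoB B a b p ∧ TwoAOneB A a b q) ∧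
      (P'.card = 3 ∧ ((∀ p ∈ P', OneATwoB B a b p) ∨ (∀ p ∈ P', TwoAOneB A a b p)))) := by
  classical
  have key : ∀ (x : {x : VA // x ≠ a}) (y : {y : VB // y ≠ b}),
      (glueV A B a b a1 a2 a3 b1 b2 b3).Adj (Sum.inl x) (Sum.inr y) →
      (x.1 = a1 ∧ y.1 = b1) ∨ (x.1 = a2 ∧ y.1 = b2) ∨ (x.1 = a3 ∧ y.1 = b3) :=
    fun x y h => (glue_lr A B a b a1 a2 a3 b1 b2 b3).1 h
  have huniq1 : ∀ (x : {x : VA // x ≠ a}) (y : {y : VB // y ≠ b}),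
      (glueV A B a b a1 a2 a3 b1 b2 b3).Adj (Sum.inl x) (Sum.inr y) →
      (x = ⟨a1, ha1⟩ ↔ y = ⟨b1, hb1⟩) := by
    intro x y h
    rcases key x y h with ⟨hx, hy⟩ | ⟨hx, hy⟩ | ⟨hx, hy⟩
    · exact iff_of_true (Subtype.ext hx) (Subtype.ext hy)
    · exact iff_of_false (fun h' => ha12 (by rw [h'] at hx; simpa using hx))
        (fun h' => hb12 (by rw [h'] at hy; simpa using hy))
    · exact iff_of_false (fun h' => ha13 (by rw [h'] at hx; simpa using hx))
        (fun h' => hb13 (by rw [h'] at hy; simpa using hy))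
  have huniq2 : ∀ (x : {x : VA // x ≠ a}) (y : {y : VB // y ≠ b}),
      (glueV A B a b a1 a2 a3 b1 b2 b3).Adj (Sum.inl x) (Sum.inr y) →
      (x = ⟨a2, ha2⟩ ↔ y = ⟨b2, hb2⟩) := by
    intro x y h
    rcases key x y h with ⟨hx, hy⟩ | ⟨hx, hy⟩ | ⟨hx, hy⟩
    · exact iff_of_false (fun h' => ha12 (by rw [h'] at hx; simpa using hx.symm))
        (fun h' => hb12 (by rw [h'] at hy; simpa using hy.symm))
    · exact iff_of_true (Subtype.ext hx) (Subtype.ext hy)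
    · exact iff_of_false (fun h' => ha23 (by rw [h'] at hx; simpa using hx))
        (fun h' => hb23 (by rw [h'] at hy; simpa using hy))
  have huniq3 : ∀ (x : {x : VA // x ≠ a}) (y : {y : VB // y ≠ b}),
      (glueV A B a b a1 a2 a3 b1 b2 b3).Adj (Sum.inl x) (Sum.inr y) →
      (x = ⟨a3, ha3⟩ ↔ y = ⟨b3, hb3⟩) := by
    intro x y h
    rcases key x y h with ⟨hx, hy⟩ | ⟨hx, hy⟩ | ⟨hx, hy⟩
    · exact iff_of_false (fun h' => ha13 (by rw [h'] at hx; simpa using hx.symm))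
        (fun h' => hb13 (by rw [h'] at hy; simpa using hy.symm))
    · exact iff_of_false (fun h' => ha23 (by rw [h'] at hx; simpa using hx.symm))
        (fun h' => hb23 (by rw [h'] at hy; simpa using hy.symm))
    · exact iff_of_true (Subtype.ext hx) (Subtype.ext hy)
  have hsubset : P' ⊆ P := fun p hp => ((hP' p).1 hp).1
  have hpaths := hP.1.1
  have hdisj := hP.1.2
  -- classification of the paths in P'
  have hcls : ∀ p ∈ P', (OneATwoB B a b p ∧ Acnt p = 1) ∨ (TwoAOneB A a b p ∧ Acnt p = 2) := by
    intro p hp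
    obtain ⟨hpP, e, he, hcr⟩ := (hP' p).1 hp
    rcases hcr with rfl | rfl | rfl
    · exact classify_one A B a b a1 a2 a3 b1 b2 b3 ⟨a1, ha1⟩ ⟨b1, hb1⟩ huniq1 p
        (hpaths p hpP) he
    · exact classify_one A B a b a1 a2 a3 b1 b2 b3 ⟨a2, ha2⟩ ⟨b2, hb2⟩ huniq2 p
        (hpaths p hpP) he
    · exact classify_one A B a b a1 a2 a3 b1 b2 b3 ⟨a3, ha3⟩ ⟨b3, hb3⟩ huniq3 p
        (hpaths p hpP) he
  -- divisibility
  have hsumP : ∑ p ∈ P, Acnt p = Fintype.card VA - 1 := by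
    rw [sum_Acnt _ P hP, card_ne_aux a]
  have hnc : ∀ p ∈ P, p ∉ P' → Acnt p = 0 ∨ Acnt p = 3 := by
    intro p hpP hp'
    refine noncross A B a b a1 a2 a3 b1 b2 b3 ha1 ha2 ha3 hb1 hb2 hb3 p (hpaths p hpP) ?_
    rintro ⟨e, he, h⟩
    exact hp' ((hP' p).2 ⟨hpP, e, he, h⟩)
  have hdvd : (3 : ℕ) ∣ ∑ p ∈ P', Acnt p := by
    have hsplit := Finset.sum_sdiff (f := Acnt) hsubset
    have hd2 : (3 : ℕ) ∣ ∑ p ∈ P \ P', Acnt p := by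
      refine Finset.dvd_sum ?_
      intro p hp
      rw [Finset.mem_sdiff] at hp
      rcases hnc p hp.1 hp.2 with h | h <;> simp [h]
    omega
  -- card bound
  have hocc : ∀ p ∈ P',
      (p.1 = (Sum.inl ⟨a1, ha1⟩ : {x : VA // x ≠ a} ⊕ {y : VB // y ≠ b}) ∨
        p.2.1 = Sum.inl ⟨a1, ha1⟩ ∨ p.2.2 = Sum.inl ⟨a1, ha1⟩) ∨
      (p.1 = Sum.inl ⟨a2, ha2⟩ ∨ p.2.1 = Sum.inl ⟨a2, ha2⟩ ∨ p.2.2 = Sum.inl ⟨a2, ha2⟩) ∨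
      (p.1 = Sum.inl ⟨a3, ha3⟩ ∨ p.2.1 = Sum.inl ⟨a3, ha3⟩ ∨ p.2.2 = Sum.inl ⟨a3, ha3⟩) := by
    intro p hp
    obtain ⟨hpP, e, he, hcr⟩ := (hP' p).1 hp
    simp only [pEdges, Set.mem_insert_iff, Set.mem_singleton_iff] at he
    rcases hcr with rfl | rfl | rfl
    · left
      rcases he with he | he <;> rw [Sym2.eq_iff] at he <;>
        rcases he with ⟨h1, -⟩ | ⟨h1, -⟩ <;> simp [← h1]
    · right; left
      rcases he with he | he <;> rw [Sym2.eq_iff] at he <;>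
        rcases he with ⟨h1, -⟩ | ⟨h1, -⟩ <;> simp [← h1]
    · right; right
      rcases he with he | he <;> rw [Sym2.eq_iff] at he <;>
        rcases he with ⟨h1, -⟩ | ⟨h1, -⟩ <;> simp [← h1]
  have hcard3 : P'.card ≤ 3 :=
    card_le_three_aux P' _ _ _ hocc
      (fun p hp q hq hne => hdisj p (hsubset hp) q (hsubset hq) hne)
  -- bounds on the sum
  have hb1' : ∀ p ∈ P', 1 ≤ Acnt p := by
    intro p hp
    rcases hcls p hp with ⟨-, h⟩ | ⟨-, h⟩ <;> omega
  have hb2' : ∀ p ∈ P', Acnt p ≤ 2 := by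
    intro p hp
    rcases hcls p hp with ⟨-, h⟩ | ⟨-, h⟩ <;> omega
  have hlow : P'.card ≤ ∑ p ∈ P', Acnt p := by
    calc P'.card = ∑ _p ∈ P', 1 := by simp
    _ ≤ _ := Finset.sum_le_sum hb1'
  have hhigh : ∑ p ∈ P', Acnt p ≤ 2 * P'.card := by
    calc ∑ p ∈ P', Acnt p ≤ ∑ _p ∈ P', 2 := Finset.sum_le_sum hb2'
    _ = 2 * P'.card := by simp [mul_comm]
  have hcases : P'.card = 0 ∨ (P'.card = 2 ∧ ∑ p ∈ P', Acnt p = 3) ∨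
      (P'.card = 3 ∧ (∑ p ∈ P', Acnt p = 3 ∨ ∑ p ∈ P', Acnt p = 6)) := by omega
  have hmain : (P' = ∅) ∨
      (∃ p ∈ P', ∃ q ∈ P', p ≠ q ∧ P' = {p, q} ∧
        OneATwoB B a b p ∧ TwoAOneB A a b q) ∨
      (P'.card = 3 ∧ ((∀ p ∈ P', OneATwoB B a b p) ∨ (∀ p ∈ P', TwoAOneB A a b p))) := by
    rcases hcases with h0 | ⟨h2, hs3⟩ | ⟨h3, hs⟩
    · exact Or.inl (Finset.card_eq_zero.1 h0)
    · right; left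
      obtain ⟨p, q, hne, hPq⟩ := Finset.card_eq_two.1 h2
      rw [hPq, Finset.sum_pair hne] at hs3
      have hpmem : p ∈ P' := by rw [hPq]; simp
      have hqmem : q ∈ P' := by rw [hPq]; simp
      rcases hcls p hpmem with ⟨hO, hap⟩ | ⟨hT, hap⟩ <;>
        rcases hcls q hqmem with ⟨hO', haq⟩ | ⟨hT', haq⟩
      · omega
      · exact ⟨p, hpmem, q, hqmem, hne, hPq, hO, hT'⟩
      · exact ⟨q, hqmem, p, hpmem, hne.symm, by rw [hPq, Finset.pair_comm], hO', hT⟩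
      · omega
    · right; right
      refine ⟨h3, ?_⟩
      rcases hs with hs | hs
      · left
        intro p hp
        rcases hcls p hp with ⟨hO, -⟩ | ⟨-, hap⟩
        · exact hO
        · exfalso
          have hlt := Finset.sum_lt_sum hb1' ⟨p, hp, by omega⟩
          simp only [Finset.sum_const, smul_eq_mul, mul_one] at hlt
          omega
      · right
        intro p hp
        rcases hcls p hp with ⟨-, hap⟩ | ⟨hT, -⟩
        · exfalso
          have hlt := Finset.sum_lt_sum hb2' ⟨p, hp, by omega⟩
          simp only [Finset.sum_const, smul_eq_mul] at hlt
          omega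
        · exact hT
  refine ⟨hmain, ?_, ?_, ?_⟩
  · rintro ⟨hemp, p, hp, -⟩
    rw [hemp] at hp
    exact absurd hp (Finset.notMem_empty p)
  · rintro ⟨hemp, hc, -⟩
    rw [hemp] at hc
    simp at hc
  · rintro ⟨⟨p, hp, q, hq, hne, hPq, -⟩, hc, -⟩
    rw [hPq, Finset.card_pair hne] at hc
    exact absurd hc (by norm_num)
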